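/- arXiv:2209.12438 — 8 statements merged into one kernel-verified Lean document; each statement's English description precedes it below -/
import Mathlib

section
/- Let G be a finite simple connected prime graph with at least 3 vertices, and let x be a vertex of G. Then there exists an extremity y of G such that d(x,y) = e(x). -/
variable {V : Type*}

/-- The closed neighbourhood `N[v]` of a vertex. -/
def closedNbhd (G : SimpleGraph V) (v : V) : Set V := insert v (G.neighborSet v)

/-- `N[S] = ⋃_{v ∈ S} N[v]`. -/
def closedNbhdSet (G : SimpleGraph V) (S : Set V) : Set V := ⋃ v ∈ S, closedNbhd G v

/-- A vertex `v` is an extremity if the subgraph induced on `V \ N[v]` is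
connected (possibly empty). -/
def IsExtremity (G : SimpleGraph V) (v : V) : Prop :=
  (G.induce (closedNbhd G v)ᶜ).Preconnected

/-- `M` is a module: every vertex outside `M` is adjacent to all of `M` or none of `M`. -/
def IsModuleSet (G : SimpleGraph V) (M : Set V) : Prop :=
  ∀ z ∉ M, ∀ x ∈ M, ∀ y ∈ M, (G.Adj z x ↔ G.Adj z y)

/-- A graph is prime if its only modules are `∅`, `V` and the singletons. -/
def IsPrimeGraph (G : SimpleGraph V) : Prop :=
  ∀ M : Set V, IsModuleSet G M → M = ∅ ∨ M = Set.univ ∨ ∃ v, M = {v}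

/-- Eccentricity of a vertex in a finite graph. -/
noncomputable def ecc [Fintype V] (G : SimpleGraph V) (u : V) : ℕ :=
  Finset.univ.sup (G.dist u)

/-- Diameter of a finite graph. -/
noncomputable def gdiam [Fintype V] (G : SimpleGraph V) : ℕ :=
  Finset.univ.sup fun u => ecc G u

/-- `u ⊥_w v`: vertices `u` and `v` lie in different connected components of the
subgraph induced on `V \ N[w]`. -/
def Perp (G : SimpleGraph V) (w u v : V) : Prop :=
  u ∉ closedNbhd G w ∧ v ∉ closedNbhd G w ∧
    ¬ ∃ p : G.Walk u v, ∀ z ∈ p.support, z ∉ closedNbhd G w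

/-- `S` is `u`-transitive: for every `x ∈ S` and vertex `y` distinct from and
nonadjacent to `x`, `x ⊥_y u` implies `y ∈ S`. -/
def UTransitive (G : SimpleGraph V) (u : V) (S : Set V) : Prop :=
  ∀ x ∈ S, ∀ y : V, y ≠ x → ¬ G.Adj x y → Perp G y x u → y ∈ S

/-- `S` is a dominating set: every vertex lies in `N[S]`. -/
def IsDominatingSet (G : SimpleGraph V) (S : Set V) : Prop :=
  ∀ v : V, ∃ s ∈ S, v ∈ closedNbhd G s

/-- `D` is a dominating target: every superset of `D` inducing a connected
subgraph is a dominating set. -/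
def IsDomTarget (G : SimpleGraph V) (D : Set V) : Prop :=
  ∀ S : Set V, D ⊆ S → (G.induce S).Connected → IsDominatingSet G S

/-- An asteroidal set: an independent set `A` such that for every `a ∈ A`, all
vertices of `A \ {a}` lie in a single connected component of the subgraph
induced on `V \ N[a]`. -/
def IsAsteroidalSet (G : SimpleGraph V) (A : Set V) : Prop :=
  (A.Pairwise fun x y => ¬ G.Adj x y) ∧
  ∀ a ∈ A, ∀ b ∈ A, ∀ c ∈ A, b ≠ a → c ≠ a →
    ∃ p : G.Walk b c, ∀ z ∈ p.support, z ∉ closedNbhd G a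

/-!
Let `k = e(x)` and, for `y` at distance `k` from `x`, let `B(y)` be the component of `x` in
`G - N[y]` (as `e(x) ≥ 2` in a prime graph, `x ∉ N[y]`). A shortest path from `x` to a vertex
`z ∉ N[y] ∪ B(y)` meets `N[y]`, so `d(x,z) ≥ k`; hence `z` is also at distance `k`, and
`B(y) ⊆ B(z)`. Choose `y` with `|B(y)|` maximal. If `G - N[y]` were disconnected, the set of
vertices `z` at distance `k` with `B(z) = B(y)` would be a module (vertices of `B(y)` see none
of it, every other vertex sees all of it) containing `y` and a vertex outside `N[y] ∪ B(y)`,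
but not `x`: this contradicts primality.
-/

open SimpleGraph Finset

variable {G : SimpleGraph V} {a b c v w x y z : V}

lemma mem_closedNbhd_iff : v ∈ closedNbhd G y ↔ v = y ∨ G.Adj y v := Set.mem_insert_iff

lemma self_mem_closedNbhd (G : SimpleGraph V) (y : V) : y ∈ closedNbhd G y :=
  Set.mem_insert _ _

lemma SimpleGraph.Adj.mem_closedNbhd (h : G.Adj y v) : v ∈ closedNbhd G y :=
  Set.mem_insert_of_mem _ h

lemma notMem_closedNbhd_of_two_le_dist (h : 2 ≤ G.dist x y) : x ∉ closedNbhd G y := by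
  rintro (rfl | hadj)
  · simp at h
  · rw [dist_eq_one_iff_adj.2 hadj.symm] at h
    omega

lemma IsPrimeGraph.eq_of_isModuleSet {M : Set V} (hP : IsPrimeGraph G) (hM : IsModuleSet G M)
    (ha : a ∈ M) (hb : b ∈ M) (hc : c ∉ M) : a = b := by
  rcases hP M hM with rfl | rfl | ⟨v, rfl⟩
  · exact ha.elim
  · exact (hc trivial).elim
  · exact ha.trans hb.symm

lemma isModuleSet_compl_singleton (hx : ∀ c, c ≠ x → G.Adj x c) : IsModuleSet G {x}ᶜ := by
  intro z hz a ha b hb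
  rw [Set.notMem_compl_iff, Set.mem_singleton_iff] at hz
  subst hz
  exact iff_of_true (hx a ha) (hx b hb)

lemma IsPrimeGraph.exists_ne_not_adj [Fintype V] (hP : IsPrimeGraph G)
    (hcard : 3 ≤ Fintype.card V) (x : V) : ∃ c, c ≠ x ∧ ¬ G.Adj x c := by
  classical
  have h : 1 < (univ.erase x).card := by
    rw [card_erase_of_mem (mem_univ x), card_univ]
    omega
  obtain ⟨a, ha, b, hb, hab⟩ := one_lt_card.mp h
  by_contra! hx
  exact hab (hP.eq_of_isModuleSet (isModuleSet_compl_singleton hx)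
    (ne_of_mem_erase ha) (ne_of_mem_erase hb) (by simp : x ∉ ({x}ᶜ : Set V)))

section Eccentricity

variable [Fintype V]

lemma dist_le_ecc (G : SimpleGraph V) (x v : V) : G.dist x v ≤ ecc G x :=
  le_sup (mem_univ v)

lemma two_le_ecc (hG : G.Connected) (hP : IsPrimeGraph G) (hcard : 3 ≤ Fintype.card V)
    (x : V) : 2 ≤ ecc G x := by
  obtain ⟨c, hcx, hc⟩ := hP.exists_ne_not_adj hcard x
  exact (hG.one_lt_dist_of_ne_of_not_adj hcx.symm hc).trans_le (dist_le_ecc G x c)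

end Eccentricity

/-- The vertex set of the component of `x` in `G - N[y]` (empty if `x ∈ N[y]`). -/
def reachOutside (G : SimpleGraph V) (y x : V) : Set V :=
  {v | ∃ p : G.Walk x v, ∀ z ∈ p.support, z ∉ closedNbhd G y}

lemma notMem_closedNbhd_of_mem_reachOutside (h : v ∈ reachOutside G y x) :
    v ∉ closedNbhd G y := by
  obtain ⟨p, hp⟩ := h
  exact hp v p.end_mem_support

lemma self_mem_reachOutside (hx : x ∉ closedNbhd G y) : x ∈ reachOutside G y x :=
  ⟨.nil, by simpa using hx⟩

lemma mem_reachOutside_of_mem_support [DecidableEq V] {p : G.Walk x v}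
    (hp : ∀ z ∈ p.support, z ∉ closedNbhd G y) (hw : w ∈ p.support) :
    w ∈ reachOutside G y x :=
  ⟨p.takeUntil w hw, fun z hz => hp z (p.support_takeUntil_subset_support hw hz)⟩

lemma mem_reachOutside_of_adj (hv : v ∈ reachOutside G y x) (h : G.Adj v w)
    (hw : w ∉ closedNbhd G y) : w ∈ reachOutside G y x := by
  obtain ⟨p, hp⟩ := hv
  refine ⟨p.concat h, fun z hz => ?_⟩
  rw [Walk.support_concat, List.mem_append, List.mem_singleton] at hz
  rcases hz with hz | rfl
  · exact hp z hz
  · exact hw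

lemma dist_le_of_notMem_reachOutside (hG : G.Connected) (hz : z ∉ closedNbhd G y)
    (hzB : z ∉ reachOutside G y x) : G.dist x y ≤ G.dist x z := by
  classical
  obtain ⟨p, hp⟩ := hG.exists_walk_length_eq_dist x z
  obtain ⟨w, hwp, hwy⟩ : ∃ w ∈ p.support, w ∈ closedNbhd G y := by
    by_contra! h
    exact hzB ⟨p, h⟩
  -- `d(w,y) ≤ 1 ≤ d(w,z)` unless `w = y`
  have hwyz : G.dist w y ≤ G.dist w z := by
    rcases mem_closedNbhd_iff.mp hwy with rfl | hadj
    · simp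
    · rw [dist_eq_one_iff_adj.2 hadj.symm]
      exact hG.pos_dist_of_ne fun e => hz (e ▸ hwy)
  have hsplit : G.dist x w + G.dist w z ≤ G.dist x z := by
    rw [← hp, ← p.take_spec hwp, Walk.length_append]
    exact Nat.add_le_add (dist_le _) (dist_le _)
  calc G.dist x y ≤ G.dist x w + G.dist w y := hG.dist_triangle
    _ ≤ G.dist x w + G.dist w z := Nat.add_le_add_left hwyz _
    _ ≤ G.dist x z := hsplit

lemma reachOutside_subset (hz : z ∉ closedNbhd G y) (hzB : z ∉ reachOutside G y x) :
    reachOutside G y x ⊆ reachOutside G z x := by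
  classical
  rintro v ⟨p, hp⟩
  refine ⟨p, fun w hw hwz => ?_⟩
  have hwB := mem_reachOutside_of_mem_support hp hw
  rcases mem_closedNbhd_iff.mp hwz with rfl | hadj
  · exact hzB hwB
  · exact hzB (mem_reachOutside_of_adj hwB hadj.symm hz)

lemma isExtremity_of_subset_reachOutside
    (h : (closedNbhd G y)ᶜ ⊆ reachOutside G y x) : IsExtremity G y := by
  rintro ⟨u, hu⟩ ⟨v, hv⟩
  obtain ⟨pu, hpu⟩ := h hu
  obtain ⟨pv, hpv⟩ := h hv
  have hq : ∀ z ∈ (pu.reverse.append pv).support, z ∈ (closedNbhd G y)ᶜ := by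
    intro z hz
    rw [Walk.mem_support_append_iff, Walk.support_reverse, List.mem_reverse] at hz
    exact hz.elim (hpu z) (hpv z)
  exact ((pu.reverse.append pv).induce _ hq).reachable

def reachOutsideClass (G : SimpleGraph V) (x y : V) : Set V :=
  {z | G.dist x z = G.dist x y ∧ reachOutside G z x = reachOutside G y x}

lemma reachOutsideClass_disjoint_closedNbhd (hz : z ∈ reachOutsideClass G x y)
    (hv : v ∈ reachOutside G y x) : v ∉ closedNbhd G z := by
  rw [← hz.2] at hv
  exact notMem_closedNbhd_of_mem_reachOutside hv

section Maximal

variable [Fintype V] (hG : G.Connected) (hy : G.dist x y = ecc G x)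
  (hmax : ∀ v, G.dist x v = ecc G x →
    (reachOutside G v x).ncard ≤ (reachOutside G y x).ncard)
include hG hy hmax

lemma mem_reachOutsideClass_of_notMem (hz : z ∈ reachOutsideClass G x y)
    (hv : v ∉ closedNbhd G z) (hvB : v ∉ reachOutside G y x) :
    v ∈ reachOutsideClass G x y := by
  obtain ⟨hzd, hzB⟩ := hz
  rw [← hzB] at hvB
  have hvd : G.dist x v = G.dist x y :=
    le_antisymm (hy ▸ dist_le_ecc G x v) (hzd ▸ dist_le_of_notMem_reachOutside hG hv hvB)
  refine ⟨hvd, (Set.eq_of_subset_of_ncard_le ?_ (hzB ▸ hmax v (hvd.trans hy))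
    (Set.toFinite _)).symm⟩
  exact hzB ▸ reachOutside_subset hv hvB

lemma isModuleSet_reachOutsideClass : IsModuleSet G (reachOutsideClass G x y) := by
  intro v hv a ha b hb
  by_cases hvB : v ∈ reachOutside G y x
  · exact iff_of_false
      (fun h => reachOutsideClass_disjoint_closedNbhd ha hvB h.symm.mem_closedNbhd)
      (fun h => reachOutsideClass_disjoint_closedNbhd hb hvB h.symm.mem_closedNbhd)
  · have hall : ∀ c ∈ reachOutsideClass G x y, G.Adj v c := by
      intro c hc
      by_contra hvc
      refine hv (mem_reachOutsideClass_of_notMem hG hy hmax hc ?_ hvB)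
      rintro (rfl | hcv)
      exacts [hv hc, hvc hcv.symm]
    exact iff_of_true (hall a ha) (hall b hb)

lemma compl_closedNbhd_subset_reachOutside (hP : IsPrimeGraph G)
    (hx : x ∉ closedNbhd G y) : (closedNbhd G y)ᶜ ⊆ reachOutside G y x := by
  intro z hz
  by_contra hzB
  have hyC : y ∈ reachOutsideClass G x y := ⟨rfl, rfl⟩
  have hxC : x ∉ reachOutsideClass G x y := fun h =>
    reachOutsideClass_disjoint_closedNbhd h (self_mem_reachOutside hx) (self_mem_closedNbhd G x)
  have hzy := hP.eq_of_isModuleSet (isModuleSet_reachOutsideClass hG hy hmax)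
    (mem_reachOutsideClass_of_notMem hG hy hmax hyC hz hzB) hyC hxC
  exact hz (hzy ▸ self_mem_closedNbhd G z)

end Maximal

lemma exists_dist_eq_ecc_maximal_reachOutside [Fintype V] (G : SimpleGraph V) (x : V) :
    ∃ y, G.dist x y = ecc G x ∧ ∀ v, G.dist x v = ecc G x →
      (reachOutside G v x).ncard ≤ (reachOutside G y x).ncard := by
  classical
  obtain ⟨y₀, -, hy₀⟩ := exists_mem_eq_sup univ ⟨x, mem_univ x⟩ (G.dist x)
  obtain ⟨y, hy, hmax⟩ := (univ.filter fun v => G.dist x v = ecc G x).exists_max_image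
    (fun v => (reachOutside G v x).ncard) ⟨y₀, mem_filter.2 ⟨mem_univ _, hy₀.symm⟩⟩
  exact ⟨y, (mem_filter.1 hy).2, fun v hv => hmax v (by simpa using hv)⟩

theorem stmt_1 [Fintype V] (G : SimpleGraph V) (hG : G.Connected)
    (hprime : IsPrimeGraph G) (hcard : 3 ≤ Fintype.card V) (x : V) :
    ∃ y : V, IsExtremity G y ∧ G.dist x y = ecc G x := by
  obtain ⟨y, hy, hmax⟩ := exists_dist_eq_ecc_maximal_reachOutside G x
  have hx : x ∉ closedNbhd G y :=
    notMem_closedNbhd_of_two_le_dist (hy ▸ two_le_ecc hG hprime hcard x)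
  exact ⟨y, isExtremity_of_subset_reachOutside
    (compl_closedNbhd_subset_reachOutside hG hy hmax hprime hx), hy⟩
end

section
/- Let G be a finite simple connected graph and let D be a nonempty dominating target of G. Then every extremity of G is contained in N[D]. -/
variable {V : Type*}

theorem stmt_4 [Fintype V] (G : SimpleGraph V) (hG : G.Connected)
    (D : Set V) (hne : D.Nonempty) (hD : IsDomTarget G D) :
    ∀ v : V, IsExtremity G v → v ∈ closedNbhdSet G D := by
  intro v hv
  by_contra h
  obtain ⟨d, hd⟩ := hne
  have hS : D ⊆ (closedNbhd G v)ᶜ := by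
    intro x hx hxN
    apply h
    refine Set.mem_biUnion hx ?_
    rcases hxN with rfl | hadj
    · exact Set.mem_insert _ _
    · exact Set.mem_insert_of_mem _ (G.adj_symm hadj)
  have hnonempty : Nonempty ↑(closedNbhd G v)ᶜ := ⟨⟨d, hS hd⟩⟩
  have hconn : (G.induce (closedNbhd G v)ᶜ).Connected := ⟨hv⟩
  obtain ⟨s, hs, hvs⟩ := hD _ hS hconn v
  apply hs
  rcases hvs with rfl | hadj
  · exact Set.mem_insert _ _
  · exact Set.mem_insert_of_mem _ (G.adj_symm hadj)
end

section
/- Let G be a finite simple connected graph and let D be a nonempty dominating target of G. Then for every vertex x of G we have F(x) ∩ N[D] ≠ ∅; moreover, if F(x) ∩ D = ∅, then F(x) ⊆ N(D). -/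
variable {V : Type*}

lemma walk_induce_reachable {G : SimpleGraph V} {S : Set V} :
    ∀ {a b : V} (p : G.Walk a b), (∀ z ∈ p.support, z ∈ S) →
    ∀ (ha : a ∈ S) (hb : b ∈ S), (G.induce S).Reachable ⟨a, ha⟩ ⟨b, hb⟩ := by
  intro a b p
  induction p with
  | nil => intro _ ha hb; exact SimpleGraph.Reachable.refl _
  | @cons a c b h q ih =>
    intro hsup ha hb
    have hc : c ∈ S := hsup c (by simp [SimpleGraph.Walk.support_cons])
    have hadj : (G.induce S).Adj ⟨a, ha⟩ ⟨c, hc⟩ := by simpa using h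
    exact hadj.reachable.trans
      (ih (fun z hz => hsup z (by simp [SimpleGraph.Walk.support_cons, hz])) hc hb)

lemma crux [Fintype V] (G : SimpleGraph V) (hG : G.Connected)
    (D : Set V) (hne : D.Nonempty) (hD : IsDomTarget G D) (x v : V)
    (hv : G.dist x v = ecc G x) :
    v ∈ closedNbhdSet G D ∨ ({w : V | G.dist x w = ecc G x} ∩ D).Nonempty := by
  classical
  set S : Set V := {u | ∃ d ∈ D, G.dist x u + G.dist u d = G.dist x d} with hS
  have hDS : D ⊆ S := by
    intro d hd
    exact ⟨d, hd, by simp⟩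
  obtain ⟨d0, hd0⟩ := hne
  have hxS : x ∈ S := ⟨d0, hd0, by simp⟩
  -- every vertex of S is reachable from x within S
  have hreach : ∀ (u : V) (hu : u ∈ S), (G.induce S).Reachable ⟨x, hxS⟩ ⟨u, hu⟩ := by
    intro u hu
    obtain ⟨d, hd, hud⟩ := id hu
    obtain ⟨p, hp⟩ := hG.exists_walk_length_eq_dist x u
    have hsup : ∀ z ∈ p.support, z ∈ S := by
      intro w hw
      have hspec := p.take_spec hw
      have hlen : (p.takeUntil w hw).length + (p.dropUntil w hw).length = p.length := by
        conv_rhs => rw [← hspec]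
        rw [SimpleGraph.Walk.length_append]
      have h1 : G.dist x w ≤ (p.takeUntil w hw).length := SimpleGraph.dist_le _
      have h2 : G.dist w u ≤ (p.dropUntil w hw).length := SimpleGraph.dist_le _
      have hle : G.dist x w + G.dist w u ≤ G.dist x u := by omega
      have htri : G.dist x w + G.dist w d ≤ G.dist x d := by
        calc G.dist x w + G.dist w d ≤ G.dist x w + (G.dist w u + G.dist u d) := by
              have := hG.dist_triangle (u := w) (v := u) (w := d); omega
          _ ≤ G.dist x u + G.dist u d := by omega
          _ = G.dist x d := hud
      have htri2 : G.dist x d ≤ G.dist x w + G.dist w d := hG.dist_triangle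
      exact ⟨d, hd, by omega⟩
    exact walk_induce_reachable p hsup hxS hu
  have hconn : (G.induce S).Connected := by
    rw [SimpleGraph.connected_iff]
    refine ⟨fun a b => ?_, ⟨⟨x, hxS⟩⟩⟩
    exact (hreach a a.2).symm.trans (hreach b b.2)
  have hdom := hD S hDS hconn v
  obtain ⟨s, hsS, hvs⟩ := hdom
  obtain ⟨d, hd, hsd⟩ := hsS
  have hxd_le : G.dist x d ≤ ecc G x := Finset.le_sup (Finset.mem_univ d)
  rcases hvs with hvs | hvs
  · -- v = s
    subst hvs
    have h1 : ecc G x ≤ G.dist x v := hv.ge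
    have h2 : G.dist x v ≤ G.dist x d := by omega
    have h3 : G.dist v d = 0 := by omega
    have : v = d := (hG.dist_eq_zero_iff).mp h3
    subst this
    exact Or.inl (Set.mem_biUnion hd (Set.mem_insert _ _))
  · -- s adjacent to v
    have hadj : G.Adj s v := hvs
    have hsv1 : G.dist s v = 1 := SimpleGraph.dist_eq_one_iff_adj.mpr hadj
    have htri : G.dist x v ≤ G.dist x s + G.dist s v := hG.dist_triangle
    by_cases hsd0 : G.dist s d = 0
    · have : s = d := (hG.dist_eq_zero_iff).mp hsd0
      subst this
      exact Or.inl (Set.mem_biUnion hd (Set.mem_insert_of_mem _ (by exact hadj : v ∈ G.neighborSet s)))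
    · have hdF : G.dist x d = ecc G x := by omega
      exact Or.inr ⟨d, hdF, hd⟩

theorem stmt_6 [Fintype V] (G : SimpleGraph V) (hG : G.Connected)
    (D : Set V) (hne : D.Nonempty) (hD : IsDomTarget G D) (x : V) :
    ({v : V | G.dist x v = ecc G x} ∩ closedNbhdSet G D).Nonempty ∧
    ({v : V | G.dist x v = ecc G x} ∩ D = ∅ →
      {v : V | G.dist x v = ecc G x} ⊆ closedNbhdSet G D \ D) := by
  classical
  have : Nonempty V := ⟨hne.choose⟩
  obtain ⟨v, -, hv⟩ := Finset.exists_mem_eq_sup Finset.univ Finset.univ_nonempty (G.dist x)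
  have hv : G.dist x v = ecc G x := hv.symm
  constructor
  · rcases crux G hG D hne hD x v hv with h | ⟨d, hdF, hdD⟩
    · exact ⟨v, hv, h⟩
    · exact ⟨d, hdF, Set.mem_biUnion hdD (Set.mem_insert _ _)⟩
  · intro hempty w hw
    rcases crux G hG D hne hD x w hw with h | hF
    · refine ⟨h, fun hwD => ?_⟩
      exact absurd (Set.mem_inter hw hwD) (by simp [hempty])
    · exact absurd hF (by simp [hempty, Set.not_nonempty_empty])
end

section
/- Let G be a finite simple connected prime graph with n ≥ 3 vertices, and let v_1, v_2, …, v_n be an ordering of its vertices satisfying the LexBFS property: for all indices i < j < k such that v_i is adjacent to v_k but not to v_j, there exists an index l < i such that v_l is adjacent to v_j but not to v_k. Then the last vertex v_n is an extremity of G. -/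
variable {V : Type*}

set_option maxHeartbeats 2000000 in
theorem stmt_10 [Fintype V] (G : SimpleGraph V) (hG : G.Connected)
    (hprime : IsPrimeGraph G) (n : ℕ) (hn : 3 ≤ n)
    (v : Fin n → V) (hbij : Function.Bijective v)
    (hlex : ∀ i j k : Fin n, i < j → j < k →
      G.Adj (v i) (v k) → ¬ G.Adj (v i) (v j) →
      ∃ l : Fin n, l < i ∧ G.Adj (v l) (v j) ∧ ¬ G.Adj (v l) (v k)) :
    IsExtremity G (v ⟨n - 1, by omega⟩) := by
  classical
  set L : Fin n := ⟨n - 1, by omega⟩ with hL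
  set z0 : Fin n := ⟨0, by omega⟩ with hz0
  have hLval : (L : ℕ) = n - 1 := rfl
  have hlt_L : ∀ j : Fin n, j ≠ L → j < L := by
    intro j hne
    have h1 := j.isLt
    have h2 : (j : ℕ) ≠ n - 1 := fun h => hne (Fin.ext (h.trans hLval.symm))
    rw [Fin.lt_def, hLval]
    omega
  have h0L : z0 < L := by
    apply hlt_L
    intro h
    have : (0:ℕ) = n - 1 := congrArg Fin.val h
    omega
  set w : V := v L with hw
  show (G.induce (closedNbhd G w)ᶜ).Preconnected
  set A : Set V := (closedNbhd G w)ᶜ with hA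
  have hmemA : ∀ x : V, x ∈ A ↔ x ≠ w ∧ ¬ G.Adj w x := by
    intro x
    simp only [hA, closedNbhd, Set.mem_compl_iff, Set.mem_insert_iff,
      SimpleGraph.mem_neighborSet]
    push_neg
    rfl
  -- Step 1 : the first vertex is not adjacent to the last one
  have hv0w : ¬ G.Adj (v z0) w := by
    intro hadj
    have huniv : ∀ x : V, x ≠ v z0 → G.Adj (v z0) x := by
      intro x hx
      obtain ⟨j, rfl⟩ := hbij.2 x
      by_contra hnadj
      have hj0 : z0 < j := by
        refine lt_of_le_of_ne ?_ ?_
        · simp only [hz0, Fin.le_def]; omega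
        · intro h; exact hx (congrArg v h.symm)
      have hjL : j < L := by
        have hne : j ≠ L := by
          intro h; subst h; exact hnadj hadj
        exact hlt_L j hne
      obtain ⟨l, hl, -, -⟩ := hlex z0 j L hj0 hjL hadj hnadj
      have : l.val < 0 := hl
      omega
    have hmod : IsModuleSet G {v z0}ᶜ := by
      intro z hzM x hx y hy
      have hz : z = v z0 := by
        by_contra h
        exact hzM (by simpa using h)
      subst hz
      have hx' : G.Adj (v z0) x := huniv x (by simpa using hx)
      have hy' : G.Adj (v z0) y := huniv y (by simpa using hy)
      simp [hx', hy']
    have hne12 : v (⟨1, by omega⟩ : Fin n) ≠ v z0 := by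
      intro h
      have := hbij.1 h
      simp [hz0, Fin.ext_iff] at this
    have hne22 : v (⟨2, by omega⟩ : Fin n) ≠ v z0 := by
      intro h
      have := hbij.1 h
      simp [hz0, Fin.ext_iff] at this
    rcases hprime _ hmod with h | h | ⟨u, hu⟩
    · have h1 : v (⟨1, by omega⟩ : Fin n) ∈ ({v z0}ᶜ : Set V) := by simpa using hne12
      rw [h] at h1; exact h1
    · have : v z0 ∈ ({v z0}ᶜ : Set V) := h ▸ Set.mem_univ _
      simp at this
    · have h1 : v (⟨1, by omega⟩ : Fin n) ∈ ({v z0}ᶜ : Set V) := by simpa using hne12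
      have h2 : v (⟨2, by omega⟩ : Fin n) ∈ ({v z0}ᶜ : Set V) := by simpa using hne22
      rw [hu] at h1 h2
      have h3 : v (⟨1, by omega⟩ : Fin n) = v (⟨2, by omega⟩ : Fin n) := by
        rw [Set.mem_singleton_iff] at h1 h2
        rw [h1, h2]
      have := hbij.1 h3
      simp [Fin.ext_iff] at this
  have hv0A : v z0 ∈ A := by
    refine (hmemA _).2 ⟨?_, fun h => hv0w h.symm⟩
    intro h
    exact absurd (hbij.1 h) (ne_of_lt h0L)
  -- Suppose not preconnected
  by_contra hcon
  unfold SimpleGraph.Preconnected at hcon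
  push_neg at hcon
  obtain ⟨a, b, hab⟩ := hcon
  set a0 : ↑A := ⟨v z0, hv0A⟩ with ha0
  have hsome : ∃ y : ↑A, ¬ (G.induce A).Reachable a0 y := by
    by_cases h1 : (G.induce A).Reachable a0 a
    · by_cases h2 : (G.induce A).Reachable a0 b
      · exact absurd (h1.symm.trans h2) hab
      · exact ⟨b, h2⟩
    · exact ⟨a, h1⟩
  obtain ⟨y, hy⟩ := hsome
  set C1 : Set V := {x | ∃ h : x ∈ A, (G.induce A).Reachable a0 ⟨x, h⟩} with hC1
  have hv0C1 : v z0 ∈ C1 := ⟨hv0A, SimpleGraph.Reachable.refl _⟩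
  have hFc : ∀ c ∈ C1, ∀ x, x ∈ A → x ∉ C1 → ¬ G.Adj c x := by
    intro c hc x hxA hxC hadj
    obtain ⟨hcA, hcR⟩ := hc
    have hedge : (G.induce A).Adj ⟨c, hcA⟩ ⟨x, hxA⟩ := by
      simpa using hadj
    exact hxC ⟨hxA, hcR.trans hedge.reachable⟩
  have hBadne : ∃ j : Fin n, v j ∈ A ∧ v j ∉ C1 := by
    obtain ⟨j, hj⟩ := hbij.2 (y : V)
    refine ⟨j, hj ▸ y.2, ?_⟩
    rintro ⟨h, hr⟩
    apply hy
    have heq : (⟨v j, h⟩ : ↑A) = y := Subtype.ext hj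
    exact heq ▸ hr
  obtain ⟨m, hmBad, hmmin⟩ := (wellFounded_lt (α := Fin n)).has_min
    {j | v j ∈ A ∧ v j ∉ C1} hBadne
  obtain ⟨hAm, hmC1⟩ := hmBad
  have hmL : m < L := by
    have h1 : m ≠ L := by
      intro h
      exact ((hmemA (v m)).1 hAm).1 (by rw [h])
    exact hlt_L m h1
  have hFb : ∀ i : Fin n, i < m → v i ∈ A → v i ∈ C1 := by
    intro i hi hiA
    by_contra hiC
    exact hmmin i ⟨hiA, hiC⟩ hi
  have hmkA : ∀ i : Fin n, i < L → ¬ G.Adj (v i) w → v i ∈ A := by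
    intro i hi hadj
    exact (hmemA _).2 ⟨fun h => (ne_of_lt hi) (hbij.1 h), fun h => hadj h.symm⟩
  -- the key exchange lemmas
  have hML0 : ∀ d : Fin n, d < m → (G.Adj (v d) (v m) ↔ G.Adj (v d) w) := by
    intro d hd
    constructor
    · intro hadj
      by_contra hnw
      have hdA : v d ∈ A := hmkA d (hd.trans hmL) hnw
      exact hFc _ (hFb d hd hdA) _ hAm hmC1 hadj
    · intro hadj
      by_contra hnadj
      obtain ⟨l, hl, hlm, hlw⟩ := hlex d m L hd hmL hadj hnadj
      have hlA : v l ∈ A := hmkA l ((hl.trans hd).trans hmL) hlw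
      exact hFc _ (hFb l (hl.trans hd) hlA) _ hAm hmC1 hlm
  have hML : ∀ zi : Fin n, m < zi → ∀ d : Fin n, d < m →
      (G.Adj (v d) (v zi) ↔ G.Adj (v d) w) := by
    intro zi hzi
    by_cases hziL : zi = L
    · subst hziL; intro d _; rfl
    · have hziL' : zi < L := hlt_L zi hziL
      by_contra hS
      push_neg at hS
      obtain ⟨d0, hd0, hiff0⟩ := hS
      have hiff0' : ¬(G.Adj (v d0) (v zi) ↔ G.Adj (v d0) w) := by tauto
      obtain ⟨δ, ⟨hδm, hδiff⟩, hδmin⟩ := (wellFounded_lt (α := Fin n)).has_min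
        {d : Fin n | d < m ∧ ¬(G.Adj (v d) (v zi) ↔ G.Adj (v d) w)} ⟨d0, hd0, hiff0'⟩
      by_cases hδw : G.Adj (v δ) w
      · have hδz : ¬ G.Adj (v δ) (v zi) := by tauto
        obtain ⟨e, he, hez, hew⟩ := hlex δ zi L (hδm.trans hzi) hziL' hδw hδz
        exact hδmin e ⟨he.trans hδm, by tauto⟩ he
      · have hδz : G.Adj (v δ) (v zi) := by tauto
        have hδA : v δ ∈ A := hmkA δ (hδm.trans hmL) hδw
        have hδC1 : v δ ∈ C1 := hFb δ hδm hδA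
        have hδm' : ¬ G.Adj (v δ) (v m) := hFc _ hδC1 _ hAm hmC1
        obtain ⟨e, he, hem, hez⟩ := hlex δ m zi hδm hzi hδz hδm'
        have hew : G.Adj (v e) w := (hML0 e (he.trans hδm)).1 hem
        exact hδmin e ⟨he.trans hδm, by tauto⟩ he
  -- the tail of the ordering is a module
  set M : Set V := v '' {j | m ≤ j} with hM
  have hmod : IsModuleSet G M := by
    intro zv hzM x hx y' hy'
    obtain ⟨d, rfl⟩ := hbij.2 zv
    have hdm : d < m := by
      by_contra h
      exact hzM ⟨d, le_of_not_gt h, rfl⟩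
    obtain ⟨j, hj, rfl⟩ := hx
    obtain ⟨j', hj', rfl⟩ := hy'
    have key : ∀ k : Fin n, m ≤ k → (G.Adj (v d) (v k) ↔ G.Adj (v d) w) := by
      intro k hk
      rcases eq_or_lt_of_le hk with h | h
      · exact h ▸ hML0 d hdm
      · exact hML k h d hdm
    rw [key j hj, key j' hj']
  rcases hprime M hmod with h | h | ⟨u, hu⟩
  · have hwM : w ∈ M := ⟨L, le_of_lt hmL, rfl⟩
    rw [h] at hwM
    exact hwM
  · have hz0M : v z0 ∈ M := h ▸ Set.mem_univ _
    obtain ⟨j, hj, hjeq⟩ := hz0M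
    have hj0 : j = z0 := hbij.1 hjeq
    have hm0 : m = z0 := le_antisymm (hj0 ▸ hj) (by simp only [hz0, Fin.le_def]; omega)
    exact hmC1 (hm0 ▸ hv0C1)
  · have h1 : v m ∈ M := ⟨m, by exact le_refl m, rfl⟩
    have h2 : w ∈ M := ⟨L, le_of_lt hmL, rfl⟩
    rw [hu, Set.mem_singleton_iff] at h1 h2
    have h3 : v m = w := by rw [h1, h2]
    exact absurd (hbij.1 h3) (ne_of_lt hmL)
end

section
/- Let G be a finite simple connected graph, let W ⊆ V be a set of vertices inducing a connected subgraph of G, and let u ∈ W. Then N[W] is a u-transitive set. In particular, for every integer ℓ ≥ 0, the ball N^ℓ[u] = {v ∈ V : d(u,v) ≤ ℓ} is u-transitive. -/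
/-!
If `y ∉ N[W]` then `W` misses `N[y]`, so for `x ∈ N[W]` the walk that steps from `x` into `W`
and runs inside `W` to `u` avoids `N[y]`. For the ball of radius `ℓ`, a shortest `u`–`x` path
must meet `N[y]` at some `z ≠ x`, whence `d(u, y) ≤ d(u, z) + 1 ≤ d(u, x) ≤ ℓ`.
-/

variable {V : Type*}

theorem mem_closedNbhd {G : SimpleGraph V} {v w : V} :
    w ∈ closedNbhd G v ↔ w = v ∨ G.Adj v w := Iff.rfl

theorem mem_closedNbhd_comm {G : SimpleGraph V} {v w : V} :
    w ∈ closedNbhd G v ↔ v ∈ closedNbhd G w := by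
  rw [mem_closedNbhd, mem_closedNbhd, eq_comm, G.adj_comm]

theorem dist_le_one_of_mem_closedNbhd {G : SimpleGraph V} {v w : V} (h : w ∈ closedNbhd G v) :
    G.dist v w ≤ 1 := by
  rcases h with rfl | hadj
  · simp
  · exact G.dist_le hadj.toWalk

namespace SimpleGraph

variable {G : SimpleGraph V} {u v z : V}

theorem dist_add_one_le_of_mem_support [DecidableEq V] {p : G.Walk u v}
    (hp : p.length = G.dist u v) (hz : z ∈ p.support) (hzv : z ≠ v) :
    G.dist u z + 1 ≤ G.dist u v := by
  have hzv_pos : 0 < G.dist z v := Reachable.pos_dist_of_ne ⟨p.dropUntil z hz⟩ hzv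
  calc G.dist u z + 1 ≤ G.dist u z + G.dist z v := by omega
    _ ≤ (p.takeUntil z hz).length + (p.dropUntil z hz).length :=
        add_le_add (G.dist_le _) (G.dist_le _)
    _ = G.dist u v := by rw [← Walk.length_append, p.take_spec hz, hp]

theorem exists_walk_support_subset_of_induce {W : Set V} {a b : W}
    (h : (G.induce W).Reachable a b) : ∃ p : G.Walk a b, ∀ z ∈ p.support, z ∈ W := by
  obtain ⟨q⟩ := h
  refine ⟨q.map (Embedding.induce W).toHom, fun z hz => ?_⟩
  erw [Walk.support_map, List.mem_map] at hz
  obtain ⟨a, -, rfl⟩ := hz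
  exact a.2

end SimpleGraph

section UTransitive

variable {G : SimpleGraph V} {u : V}

theorem Perp.exists_mem_support_mem_closedNbhd {x y : V} (h : Perp G y x u) (p : G.Walk x u) :
    ∃ z ∈ p.support, z ∈ closedNbhd G y := by
  by_contra! hp
  exact h.2.2 ⟨p, hp⟩

theorem uTransitive_closedNbhdSet {W : Set V} (hW : (G.induce W).Preconnected) (hu : u ∈ W) :
    UTransitive G u (closedNbhdSet G W) := by
  intro x hx y _ _ hperp
  obtain ⟨w, hwW, hxw⟩ : ∃ w ∈ W, x ∈ closedNbhd G w := by
    simpa [closedNbhdSet] using hx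
  obtain ⟨q, hq⟩ := G.exists_walk_support_subset_of_induce (hW ⟨w, hwW⟩ ⟨u, hu⟩)
  obtain ⟨p, hp⟩ : ∃ p : G.Walk x u, ∀ z ∈ p.support, z = x ∨ z ∈ W := by
    rcases hxw with rfl | hadj
    · exact ⟨q, fun z hz => .inr (hq z hz)⟩
    · refine ⟨.cons (G.adj_symm hadj) q, fun z hz => ?_⟩
      rw [SimpleGraph.Walk.support_cons, List.mem_cons] at hz
      exact hz.imp_right (hq z)
  obtain ⟨z, hz, hzy⟩ := Perp.exists_mem_support_mem_closedNbhd hperp p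
  rcases hp z hz with rfl | hzW
  · exact absurd hzy hperp.1
  · simp only [closedNbhdSet, Set.mem_iUnion]
    exact ⟨z, hzW, mem_closedNbhd_comm.1 hzy⟩

theorem SimpleGraph.Connected.uTransitive_ball (hG : G.Connected) (ℓ : ℕ) :
    UTransitive G u {v : V | G.dist u v ≤ ℓ} := by
  classical
  intro x hx y _ _ hperp
  obtain ⟨p, hp⟩ := hG.exists_walk_length_eq_dist u x
  obtain ⟨z, hz, hzy⟩ := Perp.exists_mem_support_mem_closedNbhd hperp p.reverse
  rw [SimpleGraph.Walk.support_reverse, List.mem_reverse] at hz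
  have hzx : z ≠ x := by
    rintro rfl
    exact hperp.1 hzy
  calc G.dist u y ≤ G.dist u z + G.dist z y := hG.dist_triangle
    _ ≤ G.dist u z + 1 := by grw [dist_le_one_of_mem_closedNbhd (mem_closedNbhd_comm.1 hzy)]
    _ ≤ G.dist u x := SimpleGraph.dist_add_one_le_of_mem_support hp hz hzx
    _ ≤ ℓ := hx

end UTransitive

theorem stmt_11_general (G : SimpleGraph V) (hG : G.Connected)
    (W : Set V) (hW : (G.induce W).Connected) (u : V) (hu : u ∈ W) :
    UTransitive G u (closedNbhdSet G W) ∧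
    ∀ ℓ : ℕ, UTransitive G u {v : V | G.dist u v ≤ ℓ} :=
  ⟨uTransitive_closedNbhdSet hW.preconnected hu, hG.uTransitive_ball⟩

theorem stmt_11 [Fintype V] (G : SimpleGraph V) (hG : G.Connected)
    (W : Set V) (hW : (G.induce W).Connected) (u : V) (hu : u ∈ W) :
    UTransitive G u (closedNbhdSet G W) ∧
    ∀ ℓ : ℕ, UTransitive G u {v : V | G.dist u v ≤ ℓ} :=
  stmt_11_general G hG W hW u hu
end

section
/- Let G be a finite simple connected graph, and let u and v be vertices such that v ∈ F(u) and d(x,v) ≤ e(u) for every x ∈ N[u]. Then there exists a set S' ⊆ V such that: v ∈ S'; S' is u-transitive; and d(s,x) ≤ e(u) for every s ∈ S' and every x ∈ N[u]. -/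
variable {V : Type*}

/-!
Take `S'` to be the set of all vertices within distance `e(u)` of every vertex of `N[u]`;
it contains `v` by hypothesis. It is `u`-transitive because `x ⊥_y u` forces `y` to be at
least as close as `x` to every `w ∈ N[u]`: a geodesic from `x` to `w`, extended by the edge
`wu` if necessary, is a walk from `x` to `u`, so it meets `N[y]` at some `z ≠ x`, and then
`d(y, w) ≤ 1 + d(z, w) ≤ d(x, w)`.
-/

open SimpleGraph

section

variable {G : SimpleGraph V}

lemma dist_le_one_of_mem_closedNbhd_s14 {y z : V} (hz : z ∈ closedNbhd G y) : G.dist y z ≤ 1 := by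
  rcases hz with rfl | hadj
  · simp
  · exact (dist_eq_one_iff_adj.mpr hadj).le

lemma Perp.exists_mem_support_closedNbhd {x y u w : V} (h : Perp G y x u)
    (hw : w ∈ closedNbhd G u) (p : G.Walk x w) : ∃ z ∈ p.support, z ∈ closedNbhd G y := by
  obtain ⟨-, hu, hno⟩ := h
  by_contra! hp
  rcases hw with rfl | hadj
  · exact hno ⟨p, hp⟩
  · refine hno ⟨p.concat hadj.symm, fun z hz => ?_⟩
    rw [Walk.support_concat, List.mem_append, List.mem_singleton] at hz
    rcases hz with hz | rfl
    exacts [hp z hz, hu]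

lemma Perp.dist_le_dist (hG : G.Connected) {x y u w : V} (h : Perp G y x u)
    (hw : w ∈ closedNbhd G u) : G.dist y w ≤ G.dist x w := by
  classical
  obtain ⟨p, hp⟩ := hG.exists_walk_length_eq_dist x w
  obtain ⟨z, hzp, hzy⟩ := h.exists_mem_support_closedNbhd hw p
  have hzx : z ≠ x := fun hzx => h.1 (hzx ▸ hzy)
  have hdrop := Walk.length_dropUntil_lt_length hzp hzx
  calc G.dist y w ≤ G.dist y z + G.dist z w := hG.dist_triangle
    _ ≤ 1 + (p.dropUntil z hzp).length :=
      add_le_add (dist_le_one_of_mem_closedNbhd_s14 hzy) (dist_le _)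
    _ ≤ G.dist x w := by omega

lemma uTransitive_setOf_forall_dist_le (hG : G.Connected) (u : V) (k : ℕ) :
    UTransitive G u {s | ∀ w ∈ closedNbhd G u, G.dist s w ≤ k} :=
  fun _ hx _ _ _ hperp w hw => (hperp.dist_le_dist hG hw).trans (hx w hw)

end

theorem stmt_14_general [Fintype V] (G : SimpleGraph V) (hG : G.Connected)
    (u v : V)
    (hx : ∀ x ∈ closedNbhd G u, G.dist x v ≤ ecc G u) :
    ∃ S' : Set V, v ∈ S' ∧ UTransitive G u S' ∧
      ∀ s ∈ S', ∀ x ∈ closedNbhd G u, G.dist s x ≤ ecc G u :=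
  ⟨{s | ∀ w ∈ closedNbhd G u, G.dist s w ≤ ecc G u},
    fun w hw => G.dist_comm ▸ hx w hw, uTransitive_setOf_forall_dist_le hG u _, fun _ hs => hs⟩

theorem stmt_14 [Fintype V] (G : SimpleGraph V) (hG : G.Connected)
    (u v : V) (hv : G.dist u v = ecc G u)
    (hx : ∀ x ∈ closedNbhd G u, G.dist x v ≤ ecc G u) :
    ∃ S' : Set V, v ∈ S' ∧ UTransitive G u S' ∧
      ∀ s ∈ S', ∀ x ∈ closedNbhd G u, G.dist s x ≤ ecc G u :=
  stmt_14_general G hG u v hx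
end

section
/- Let G be a finite simple connected graph, let M be a module of G, let m ∈ M, and let H be the subgraph of G induced on (V \ M) ∪ {m}. If G has a dominating target of cardinality at most k, then H has a dominating target of cardinality at most k. -/
variable {V : Type*}

private lemma cross_edge {α : Type*} {G : SimpleGraph α} {M : Set α} :
    ∀ {a z : α}, G.Walk a z → a ∈ M → z ∉ M → ∃ x ∈ M, ∃ y, y ∉ M ∧ G.Adj x y := by
  intro a z p
  induction p with
  | nil => intro ha hz; exact absurd ha hz
  | @cons a b z h q ih =>
    intro ha hz
    by_cases hb : b ∈ M
    · exact ih hb hz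
    · exact ⟨a, ha, b, hb, h⟩

private lemma singleton_induce_connected {α : Type*} (G : SimpleGraph α) (d : α) :
    (G.induce {d}).Connected := by
  rw [SimpleGraph.connected_iff]
  refine ⟨fun u v => ?_, ⟨⟨d, rfl⟩⟩⟩
  rw [Subsingleton.elim u v]

/-- Key lemma: if `S` is a connected set in the induced graph on `W` containing `m`
and a `G`-neighbour `z` of `m` outside `M`, and `D ⊆ ↑S ∪ M` is a dominating target
of `G`, then `S` dominates the induced graph on `W`. -/
private lemma lemA {α : Type*} {G : SimpleGraph α} {M W : Set α}
    (hM : IsModuleSet G M) {m : α} (hm : m ∈ M) (hmW : m ∈ W)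
    (hWM : ∀ x ∈ W, x ∈ M → x = m)
    {D : Set α} (hDt : IsDomTarget G D)
    (S : Set ↥W) (hconn : ((G.induce W).induce S).Connected)
    (hmS : ⟨m, hmW⟩ ∈ S)
    {z : α} (hz : z ∉ M) (hadj : G.Adj m z) (hzS : z ∈ Subtype.val '' S)
    (hDT : D ⊆ Subtype.val '' S ∪ M) :
    IsDominatingSet (G.induce W) S := by
  classical
  set T : Set α := Subtype.val '' S ∪ M with hTdef
  have hsubT : Subtype.val '' S ⊆ T := Set.subset_union_left
  let f : ((G.induce W).induce S) →g (G.induce T) :=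
    ⟨fun a => ⟨a.1.1, hsubT ⟨a.1, a.2, rfl⟩⟩, fun hadj => hadj⟩
  have mT : m ∈ T := Or.inr hm
  have reach : ∀ u : ↥T, (G.induce T).Reachable u ⟨m, mT⟩ := by
    intro u
    rcases u.2 with h | h
    · obtain ⟨s, hsS, hval⟩ := h
      have h2 := (hconn.preconnected ⟨s, hsS⟩ ⟨⟨m, hmW⟩, hmS⟩).map f
      have he : u = f ⟨s, hsS⟩ := Subtype.ext hval.symm
      have he2 : f ⟨⟨m, hmW⟩, hmS⟩ = ⟨m, mT⟩ := rfl
      rw [he, ← he2]; exact h2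
    · by_cases hum : (u : α) = m
      · rw [show u = (⟨m, mT⟩ : ↥T) from Subtype.ext hum]
      · obtain ⟨sz, hszS, hszv⟩ := hzS
        have hzT : z ∈ T := hsubT ⟨sz, hszS, hszv⟩
        have a1 : (G.induce T).Adj u ⟨z, hzT⟩ :=
          ((hM z hz (u : α) h m hm).mpr hadj.symm).symm
        have a2 : (G.induce T).Adj ⟨z, hzT⟩ ⟨m, mT⟩ := hadj.symm
        exact a1.reachable.trans a2.reachable
  have hTconn : (G.induce T).Connected := by
    rw [SimpleGraph.connected_iff]
    exact ⟨fun u v => (reach u).trans (reach v).symm, ⟨⟨m, mT⟩⟩⟩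
  have hdom := hDt T hDT hTconn
  intro w
  obtain ⟨t, htT, hwt⟩ := hdom (w : α)
  rcases htT with h | h
  · obtain ⟨s, hsS, rfl⟩ := h
    refine ⟨s, hsS, ?_⟩
    rcases Set.mem_insert_iff.mp hwt with h1 | h1
    · exact Set.mem_insert_iff.mpr (Or.inl (Subtype.ext h1))
    · exact Set.mem_insert_iff.mpr (Or.inr h1)
  · by_cases hwM : (w : α) ∈ M
    · have hwm : (w : α) = m := hWM _ w.2 hwM
      exact ⟨⟨m, hmW⟩, hmS, Set.mem_insert_iff.mpr (Or.inl (Subtype.ext hwm))⟩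
    · rcases Set.mem_insert_iff.mp hwt with h1 | h1
      · exact absurd (h1 ▸ h) hwM
      · have hadjw : G.Adj m (w : α) := ((hM (w : α) hwM t h m hm).mp h1.symm).symm
        exact ⟨⟨m, hmW⟩, hmS, Set.mem_insert_iff.mpr (Or.inr hadjw)⟩

/-- Simpler variant: `D ⊆ ↑S`. -/
private lemma lemB {α : Type*} {G : SimpleGraph α} {W : Set α}
    {D : Set α} (hDt : IsDomTarget G D)
    (S : Set ↥W) (hconn : ((G.induce W).induce S).Connected)
    (hDT : D ⊆ Subtype.val '' S) :
    IsDominatingSet (G.induce W) S := by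
  classical
  set T : Set α := Subtype.val '' S with hTdef
  let f : ((G.induce W).induce S) →g (G.induce T) :=
    ⟨fun a => ⟨a.1.1, ⟨a.1, a.2, rfl⟩⟩, fun hadj => hadj⟩
  have hTconn : (G.induce T).Connected := by
    rw [SimpleGraph.connected_iff]
    obtain ⟨s0⟩ := hconn.nonempty
    refine ⟨fun u v => ?_, ⟨⟨s0.1.1, ⟨s0.1, s0.2, rfl⟩⟩⟩⟩
    obtain ⟨su, hsu, hvu⟩ := u.2
    obtain ⟨sv, hsv, hvv⟩ := v.2
    have h2 := (hconn.preconnected ⟨su, hsu⟩ ⟨sv, hsv⟩).map f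
    have e1 : u = f ⟨su, hsu⟩ := Subtype.ext hvu.symm
    have e2 : v = f ⟨sv, hsv⟩ := Subtype.ext hvv.symm
    rw [e1, e2]; exact h2
  have hdom := hDt T hDT hTconn
  intro w
  obtain ⟨t, htT, hwt⟩ := hdom (w : α)
  obtain ⟨s, hsS, rfl⟩ := htT
  refine ⟨s, hsS, ?_⟩
  rcases Set.mem_insert_iff.mp hwt with h1 | h1
  · exact Set.mem_insert_iff.mpr (Or.inl (Subtype.ext h1))
  · exact Set.mem_insert_iff.mpr (Or.inr h1)

theorem stmt_15 [Fintype V] (G : SimpleGraph V) (hG : G.Connected)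
    (M : Set V) (hM : IsModuleSet G M) (m : V) (hm : m ∈ M) (k : ℕ)
    (hD : ∃ D : Set V, IsDomTarget G D ∧ D.ncard ≤ k) :
    ∃ D' : Set ↥(Mᶜ ∪ {m} : Set V),
      IsDomTarget (G.induce (Mᶜ ∪ {m} : Set V)) D' ∧ D'.ncard ≤ k := by
  classical
  obtain ⟨D, hDt, hDk⟩ := hD
  set W : Set V := Mᶜ ∪ {m} with hWdef
  have hmW : m ∈ W := Or.inr rfl
  have hWM : ∀ x ∈ W, x ∈ M → x = m := by
    rintro x (hx | hx) hxM
    · exact absurd hxM hx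
    · exact hx
  have hpre : ∀ A : Set V, (Subtype.val ⁻¹' A : Set ↥W).ncard ≤ A.ncard := by
    intro A
    calc (Subtype.val ⁻¹' A : Set ↥W).ncard
        = (Subtype.val '' (Subtype.val ⁻¹' A : Set ↥W)).ncard :=
          (Set.ncard_image_of_injective _ Subtype.val_injective).symm
      _ ≤ A.ncard := Set.ncard_le_ncard (Set.image_preimage_subset _ _) (Set.toFinite A)
  by_cases hDMc : D ⊆ Mᶜ
  · refine ⟨Subtype.val ⁻¹' D, ?_, le_trans (hpre D) hDk⟩
    intro S hDS hconn
    refine lemB hDt S hconn ?_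
    intro d hd
    exact ⟨⟨d, Or.inl (hDMc hd)⟩, hDS hd, rfl⟩
  · have hd0 : ∃ d ∈ D, d ∈ M := by
      rw [Set.not_subset] at hDMc
      obtain ⟨d0, hd0D, hd0⟩ := hDMc
      exact ⟨d0, hd0D, not_not.mp hd0⟩
    obtain ⟨d0, hd0D, hd0M⟩ := hd0
    have hDne : D.Nonempty := ⟨d0, hd0D⟩
    have hk1 : 1 ≤ k := le_trans ((Set.ncard_pos (Set.toFinite D)).mpr hDne) hDk
    by_cases hMuniv : M = Set.univ
    · refine ⟨{⟨m, hmW⟩}, ?_, by simpa using hk1⟩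
      intro S hDS hconn w
      have hwm : (w : V) = m := by
        rcases w.2 with h | h
        · exact absurd (by simp [hMuniv]) h
        · exact h
      exact ⟨⟨m, hmW⟩, hDS rfl, Set.mem_insert_iff.mpr (Or.inl (Subtype.ext hwm))⟩
    · obtain ⟨z0, hz0M⟩ : ∃ z, z ∉ M := by
        by_contra hcon
        push_neg at hcon
        exact hMuniv (Set.eq_univ_of_forall hcon)
      obtain ⟨x, hxM, y, hyM, hxy⟩ :=
        cross_edge ((hG.preconnected m z0).some) hm hz0M
      have hmy : G.Adj m y := ((hM y hyM x hxM m hm).mp hxy.symm).symm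
      have hyW : y ∈ W := Or.inl hyM
      by_cases hDM : D ⊆ M
      · by_cases hD1 : D.ncard = 1
        · obtain ⟨d, hDd⟩ := Set.ncard_eq_one.mp hD1
          have hdM : d ∈ M := by
            have : d0 = d := by rw [hDd] at hd0D; exact hd0D
            rwa [this] at hd0M
          have hNd : ∀ v, v ∈ closedNbhd G d := by
            intro v
            obtain ⟨s, hs, hcl⟩ :=
              hDt {d} (by rw [hDd]) (singleton_induce_connected G d) v
            rwa [Set.mem_singleton_iff.mp hs] at hcl
          refine ⟨{⟨m, hmW⟩}, ?_, by simpa using hk1⟩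
          intro S hDS hconn w
          refine ⟨⟨m, hmW⟩, hDS rfl, ?_⟩
          by_cases hwm : (w : V) = m
          · exact Set.mem_insert_iff.mpr (Or.inl (Subtype.ext hwm))
          · have hwM : (w : V) ∉ M := fun h => hwm (hWM _ w.2 h)
            rcases Set.mem_insert_iff.mp (hNd (w : V)) with h1 | h1
            · exact absurd (h1 ▸ hdM) hwM
            · have : G.Adj m (w : V) := ((hM (w : V) hwM d hdM m hm).mp h1.symm).symm
              exact Set.mem_insert_iff.mpr (Or.inr this)
        · have hD2 : 2 ≤ D.ncard := by
            have := (Set.ncard_pos (Set.toFinite D)).mpr hDne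
            omega
          refine ⟨{⟨m, hmW⟩, ⟨y, hyW⟩}, ?_, ?_⟩
          · intro S hDS hconn
            refine lemA hM hm hmW hWM hDt S hconn (hDS (Or.inl rfl)) hyM hmy
              ⟨⟨y, hyW⟩, hDS (Or.inr rfl), rfl⟩ (fun d hd => Or.inr (hDM hd))
          · calc ({⟨m, hmW⟩, ⟨y, hyW⟩} : Set ↥W).ncard ≤ ({⟨y, hyW⟩} : Set ↥W).ncard + 1 :=
                Set.ncard_insert_le _ _
              _ ≤ 2 := by simp
              _ ≤ k := le_trans hD2 hDk
      · -- D has elements both in M and outside M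
        obtain ⟨d1, hd1D, hd1M⟩ := Set.not_subset.mp hDM
        have hd1W : d1 ∈ W := Or.inl hd1M
        refine ⟨Subtype.val ⁻¹' (insert m (D ∩ Mᶜ)), ?_, ?_⟩
        · intro S hDS hconn
          have hmS : (⟨m, hmW⟩ : ↥W) ∈ S := hDS (Set.mem_insert _ _)
          have hd1S : (⟨d1, hd1W⟩ : ↥W) ∈ S :=
            hDS (Set.mem_insert_iff.mpr (Or.inr ⟨hd1D, hd1M⟩))
          -- find a neighbour of m inside S
          have hne : (⟨⟨m, hmW⟩, hmS⟩ : ↥S) ≠ ⟨⟨d1, hd1W⟩, hd1S⟩ := by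
            intro hcon
            apply hd1M
            have : m = d1 := congrArg (fun a => ((a : ↥S) : ↥W).1) hcon
            rwa [← this]
          obtain ⟨xx, hxx, yy, hyy, hxxyy⟩ :=
            cross_edge (M := ({⟨⟨m, hmW⟩, hmS⟩} : Set ↥S))
              ((hconn.preconnected ⟨⟨m, hmW⟩, hmS⟩ ⟨⟨d1, hd1W⟩, hd1S⟩).some)
              rfl (by simpa using hne.symm)
          have hxxm : xx = ⟨⟨m, hmW⟩, hmS⟩ := hxx
          rw [hxxm] at hxxyy
          have hmyy : G.Adj m (yy : ↥W).1 := hxxyy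
          have hyyM : ((yy : ↥W) : V) ∉ M := by
            intro hcon
            exact hmyy.ne (hWM _ (yy : ↥W).2 hcon).symm
          refine lemA hM hm hmW hWM hDt S hconn hmS hyyM hmyy
            ⟨(yy : ↥W), yy.2, rfl⟩ ?_
          intro d hd
          by_cases hdM : d ∈ M
          · exact Or.inr hdM
          · exact Or.inl ⟨⟨d, Or.inl hdM⟩,
              hDS (Set.mem_insert_iff.mpr (Or.inr ⟨hd, hdM⟩)), rfl⟩
        · have hss : D ∩ Mᶜ ⊂ D :=
            ⟨Set.inter_subset_left, fun hsub => (hsub hd0D).2 hd0M⟩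
          calc (Subtype.val ⁻¹' (insert m (D ∩ Mᶜ)) : Set ↥W).ncard
              ≤ (insert m (D ∩ Mᶜ)).ncard := hpre _
            _ ≤ (D ∩ Mᶜ).ncard + 1 := Set.ncard_insert_le _ _
            _ ≤ D.ncard := Set.ncard_lt_ncard hss (Set.toFinite D)
            _ ≤ k := hDk
end

section
/- Let G be a finite simple connected graph, let u and v be vertices with v ∈ F(u), and let x ∈ N[u] satisfy d(x,v) = e(u). Then every vertex w lying on a shortest v–x path (i.e., with d(v,w) + d(w,x) = d(v,x)) such that d(v,w) ≥ 3 satisfies w ∉ N[F(u)]; that is, w ∉ F(u) and w has no neighbour in F(u). -/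
variable {V : Type*}

namespace SimpleGraph

variable {G : SimpleGraph V} {u v w x : V}

lemma reachable_of_mem_closedNbhd (hx : x ∈ closedNbhd G u) : G.Reachable u x := by
  rcases hx with rfl | hadj
  · rfl
  · exact hadj.reachable

lemma dist_le_one_of_mem_closedNbhd (hx : x ∈ closedNbhd G u) : G.dist u x ≤ 1 := by
  rcases hx with rfl | hadj
  · simp
  · exact (dist_eq_one_iff_adj.mpr hadj).le

lemma dist_add_dist_le_of_mem_closedNbhd (hx : x ∈ closedNbhd G u)
    (hw : G.dist v w + G.dist w x = G.dist v x) :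
    G.dist u w + G.dist v w ≤ G.dist v x + 1 := by
  have htri : G.dist u w ≤ G.dist u x + G.dist x w :=
    (reachable_of_mem_closedNbhd hx).dist_triangle_left w
  have hux := dist_le_one_of_mem_closedNbhd hx
  have hxw : G.dist x w = G.dist w x := dist_comm
  omega

end SimpleGraph

theorem stmt_18_general [Fintype V] (G : SimpleGraph V)
    (u v : V)
    (x : V) (hx : x ∈ closedNbhd G u) (hxv : G.dist x v = ecc G u)
    (w : V) (hw : G.dist v w + G.dist w x = G.dist v x) (h3 : 3 ≤ G.dist v w) :
    G.dist u w ≠ ecc G u ∧ ∀ z : V, G.dist u z = ecc G u → ¬ G.Adj w z := by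
  have hfar : G.dist u w + 2 ≤ ecc G u := by
    have h := SimpleGraph.dist_add_dist_le_of_mem_closedNbhd hx hw
    have hvx : G.dist v x = ecc G u := SimpleGraph.dist_comm.trans hxv
    omega
  refine ⟨by omega, fun z hz hadj => ?_⟩
  rcases hadj.diff_dist_adj (u := u) with h | h | h <;> omega

theorem stmt_18 [Fintype V] (G : SimpleGraph V) (hG : G.Connected)
    (u v : V) (hv : G.dist u v = ecc G u)
    (x : V) (hx : x ∈ closedNbhd G u) (hxv : G.dist x v = ecc G u)
    (w : V) (hw : G.dist v w + G.dist w x = G.dist v x) (h3 : 3 ≤ G.dist v w) :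
    G.dist u w ≠ ecc G u ∧ ∀ z : V, G.dist u z = ecc G u → ¬ G.Adj w z :=
  stmt_18_general G u v x hx hxv w hw h3
end
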